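/- If n is even and there exists a Hadamard matrix of order n, then the complete bipartite graph K_{n/2,n/2} is Hadamard diagonalizable. -/

import Mathlib

open Matrix

def IsHadamardMatrix {n : ℕ} (H : Matrix (Fin n) (Fin n) ℝ) : Prop :=
  (∀ i j, H i j = 1 ∨ H i j = -1) ∧ Hᵀ * H = (n : ℝ) • 1

open scoped Classical in
noncomputable def lap {n : ℕ} (G : SimpleGraph (Fin n)) : Matrix (Fin n) (Fin n) ℝ :=
  G.lapMatrix ℝ

def HadamardDiagonalizable {n : ℕ} (G : SimpleGraph (Fin n)) : Prop :=
  ∃ (H : Matrix (Fin n) (Fin n) ℝ) (Λ : Fin n → ℝ),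
    IsHadamardMatrix H ∧ lap G = (n : ℝ)⁻¹ • (H * Matrix.diagonal Λ * Hᵀ)

/-- The complete bipartite graph `K_{n/2,n/2}` realized on `Fin n` with parts
`{0,…,n/2-1}` and `{n/2,…,n-1}`. -/
def completeBipartiteHalf (n : ℕ) : SimpleGraph (Fin n) where
  Adj u v := ¬ ((u : ℕ) < n / 2 ↔ (v : ℕ) < n / 2)
  symm := by constructor; intro u v h h'; exact h h'.symm
  loopless := by constructor; intro u h; exact h Iff.rfl

/-!
Multiplying rows by signs, a Hadamard matrix `H` can be taken to have an all-ones column `z`; any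
other column `o` is orthogonal to it, hence has as many `+1` as `-1` entries (so `n` is even once
`n ≥ 2`), and after permuting rows it is `+1` exactly on the first half. Writing `c` for this
column and `𝟙` for the all-ones one, `L(K_{n/2,n/2}) = (n/2) I - ½ 𝟙𝟙ᵀ + ½ c cᵀ`, and
`I = (1/n) H Hᵀ`, so `L = (1/n) H diag(Λ) Hᵀ` with `Λ` equal to `0` at `z`, `n` at `o` and `n/2`
elsewhere.
-/

open Finset

theorem Equiv.Perm.exists_forall_iff_of_card_eq {ι : Type*} [Fintype ι] {p q : ι → Prop}
    [DecidablePred p] [DecidablePred q]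
    (h : Fintype.card {i // p i} = Fintype.card {i // q i}) :
    ∃ σ : Equiv.Perm ι, ∀ i, q (σ i) ↔ p i := by
  let e := Fintype.equivOfCardEq h
  refine ⟨e.extendSubtype, fun i => ⟨fun hq => ?_, e.extendSubtype_mem i⟩⟩
  by_contra hp
  exact e.extendSubtype_not_mem i hp hq

theorem two_mul_card_filter_eq_one_of_sum_eq_zero {ι : Type*} [Fintype ι] {v : ι → ℝ}
    (hv : ∀ i, v i = 1 ∨ v i = -1) (hsum : ∑ i, v i = 0) :
    2 * #{i | v i = 1} = Fintype.card ι := by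
  have hshift : ∀ i, v i + 1 = if v i = 1 then 2 else 0 := fun i => by
    rcases hv i with h | h <;> norm_num [h]
  have : ((2 * #{i | v i = 1} : ℕ) : ℝ) = Fintype.card ι :=
    calc ((2 * #{i | v i = 1} : ℕ) : ℝ) = ∑ i, (v i + 1) := by
          simp only [hshift, sum_ite, sum_const_zero, sum_const, nsmul_eq_mul]; push_cast; ring
      _ = Fintype.card ι := by simp [sum_add_distrib, hsum]
  exact_mod_cast this

namespace IsHadamardMatrix

variable {n : ℕ} {H : Matrix (Fin n) (Fin n) ℝ}

theorem mul_self_apply (hH : IsHadamardMatrix H) (i j : Fin n) : H i j * H i j = 1 :=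
  mul_self_eq_one_iff.mpr (hH.1 i j)

theorem mul_transpose (hH : IsHadamardMatrix H) : H * Hᵀ = (n : ℝ) • 1 := by
  rcases Nat.eq_zero_or_pos n with rfl | hn
  · exact Subsingleton.elim _ _
  have hn' : (n : ℝ) ≠ 0 := by positivity
  have hleft : ((n : ℝ)⁻¹ • Hᵀ) * H = 1 := by
    rw [smul_mul, hH.2, smul_smul, inv_mul_cancel₀ hn', one_smul]
  have hright : (n : ℝ)⁻¹ • (H * Hᵀ) = 1 := by
    rw [← Matrix.mul_smul]; exact mul_eq_one_comm.mp hleft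
  rw [← hright, smul_smul, mul_inv_cancel₀ hn', one_smul]

theorem diagonal_mul (hH : IsHadamardMatrix H) {s : Fin n → ℝ} (hs : ∀ i, s i * s i = 1) :
    IsHadamardMatrix (diagonal s * H) := by
  refine ⟨fun i j => ?_, ?_⟩
  · rw [Matrix.diagonal_mul]
    exact mul_self_eq_one_iff.mp (by rw [mul_mul_mul_comm, hs, hH.mul_self_apply, one_mul])
  · have : diagonal s * diagonal s = 1 := by
      rw [diagonal_mul_diagonal, ← diagonal_one]; exact congrArg diagonal (funext hs)
    rw [transpose_mul, diagonal_transpose, Matrix.mul_assoc, ← Matrix.mul_assoc (diagonal s),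
      this, Matrix.one_mul, hH.2]

theorem submatrix_perm (hH : IsHadamardMatrix H) (σ : Equiv.Perm (Fin n)) :
    IsHadamardMatrix (H.submatrix σ id) :=
  ⟨fun i j => hH.1 (σ i) j, by
    rw [transpose_submatrix, submatrix_mul_equiv (e₂ := σ), hH.2, submatrix_id_id]⟩

theorem exists_forall_apply_eq_one (hH : IsHadamardMatrix H) (z : Fin n) :
    ∃ M, IsHadamardMatrix M ∧ ∀ i, M i z = 1 :=
  ⟨diagonal (fun i => H i z) * H, hH.diagonal_mul (fun i => hH.mul_self_apply i z),
    fun i => by rw [Matrix.diagonal_mul]; exact hH.mul_self_apply i z⟩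

theorem two_mul_card_apply_eq_one (hH : IsHadamardMatrix H) {z o : Fin n}
    (hz : ∀ i, H i z = 1) (hzo : z ≠ o) : 2 * #{i | H i o = 1} = n := by
  have horth := congrFun (congrFun hH.2 z) o
  simp only [mul_apply, transpose_apply, hz, one_mul, Matrix.smul_apply, one_apply_ne hzo,
    smul_zero] at horth
  simpa using two_mul_card_filter_eq_one_of_sum_eq_zero (fun i => hH.1 i o) horth

theorem even (hH : IsHadamardMatrix H) (hn : 2 ≤ n) : Even n := by
  obtain ⟨M, hM, hz⟩ := hH.exists_forall_apply_eq_one ⟨0, by omega⟩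
  rw [← hM.two_mul_card_apply_eq_one hz (o := ⟨1, hn⟩) (by simp [Fin.ext_iff])]
  exact even_two_mul _

theorem exists_normalized (hH : IsHadamardMatrix H) {z o : Fin n} (hzo : z ≠ o) :
    ∃ M, IsHadamardMatrix M ∧ (∀ i, M i z = 1) ∧
      ∀ i, M i o = if (i : ℕ) < n / 2 then 1 else -1 := by
  obtain ⟨M, hM, hz⟩ := hH.exists_forall_apply_eq_one z
  have hcard := hM.two_mul_card_apply_eq_one hz hzo
  obtain ⟨σ, hσ⟩ := Equiv.Perm.exists_forall_iff_of_card_eq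
    (p := fun i : Fin n => (i : ℕ) < n / 2) (q := fun i => M i o = 1) (by
      rw [Fintype.card_subtype, Fintype.card_subtype, Fin.card_filter_val_lt]; omega)
  refine ⟨M.submatrix σ id, hM.submatrix_perm σ, fun i => hz (σ i), fun i => ?_⟩
  split_ifs with hi
  · exact (hσ i).mpr hi
  · exact (hM.1 (σ i) o).resolve_left (mt (hσ i).mp hi)

end IsHadamardMatrix

section CompleteBipartiteHalf

variable {n : ℕ}

theorem completeBipartiteHalf_adj_iff {u v : Fin n} :
    (completeBipartiteHalf n).Adj u v ↔ ¬ ((u : ℕ) < n / 2 ↔ (v : ℕ) < n / 2) := Iff.rfl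

theorem completeBipartiteHalf_degree (hn : Even n) [DecidableRel (completeBipartiteHalf n).Adj]
    (v : Fin n) : (completeBipartiteHalf n).degree v = n / 2 := by
  obtain ⟨m, rfl⟩ := hn
  rw [← SimpleGraph.card_neighborFinset_eq_degree, SimpleGraph.neighborFinset_eq_filter]
  simp only [completeBipartiteHalf_adj_iff]
  by_cases hv : (v : ℕ) < (m + m) / 2
  · simp only [hv, true_iff]
    rw [filter_not, card_univ_sdiff, Fin.card_filter_val_lt]
    rw [Fintype.card_fin]; omega
  · simp only [hv, false_iff, not_not]
    rw [Fin.card_filter_val_lt]; omega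

open scoped Classical in
theorem lap_completeBipartiteHalf_apply (hn : Even n) (i k : Fin n) :
    lap (completeBipartiteHalf n) i k =
      (if i = k then (n / 2 : ℝ) else 0) -
        if ((i : ℕ) < n / 2 ↔ (k : ℕ) < n / 2) then 0 else 1 := by
  simp only [lap, SimpleGraph.lapMatrix, SimpleGraph.degMatrix, Matrix.sub_apply, diagonal_apply,
    SimpleGraph.adjMatrix_apply, completeBipartiteHalf_degree hn, completeBipartiteHalf_adj_iff,
    ite_not]
  split_ifs <;> simp_all [Nat.cast_div (even_iff_two_dvd.mp hn)]

theorem lap_completeBipartiteHalf_eq (hn : Even n) {M : Matrix (Fin n) (Fin n) ℝ}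
    (hM : IsHadamardMatrix M) {z o : Fin n} (hzo : z ≠ o) (hz : ∀ i, M i z = 1)
    (ho : ∀ i, M i o = if (i : ℕ) < n / 2 then 1 else -1) :
    lap (completeBipartiteHalf n) = (n : ℝ)⁻¹ •
      (M * diagonal (fun j => if j = z then 0 else if j = o then (n : ℝ) else n / 2) * Mᵀ) := by
  ext i k
  have hn0 : (n : ℝ) ≠ 0 := Nat.cast_ne_zero.mpr z.pos.ne'
  have hΛ : ∀ j, (if j = z then 0 else if j = o then (n : ℝ) else n / 2) =
      n / 2 - (if j = z then (n : ℝ) / 2 else 0) + (if j = o then (n : ℝ) / 2 else 0) := by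
    intro j
    rcases eq_or_ne j z with rfl | hjz
    · simp [hzo]
    rcases eq_or_ne j o with rfl | hjo
    · simp [hjz]
    · simp [hjz, hjo]
  have hrow : ∑ j, M i j * M k j = if i = k then (n : ℝ) else 0 := by
    simpa [mul_apply, one_apply] using congrFun (congrFun hM.mul_transpose i) k
  have hsign : M i o * M k o = if ((i : ℕ) < n / 2 ↔ (k : ℕ) < n / 2) then 1 else -1 := by
    rw [ho, ho]
    by_cases hi : (i : ℕ) < n / 2 <;> by_cases hk : (k : ℕ) < n / 2 <;> simp [hi, hk]
  have hsum : ∑ j, M i j * (if j = z then 0 else if j = o then (n : ℝ) else n / 2) * M k j =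
      n / 2 * ∑ j, M i j * M k j - n / 2 * (M i z * M k z) + n / 2 * (M i o * M k o) :=
    calc _ = ∑ j, (n / 2 * (M i j * M k j) - (if j = z then n / 2 * (M i j * M k j) else 0)
          + (if j = o then n / 2 * (M i j * M k j) else 0)) :=
          sum_congr rfl fun j _ => by rw [hΛ]; split_ifs <;> ring
      _ = _ := by
          simp only [sum_add_distrib, sum_sub_distrib, ← mul_sum, sum_ite_eq', mem_univ, if_true]
  rw [lap_completeBipartiteHalf_apply hn, Matrix.smul_apply, smul_eq_mul]
  simp only [mul_apply (M := M * _), mul_diagonal, transpose_apply]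
  rw [hsum, hrow, hz, hz, hsign]
  rcases eq_or_ne i k with rfl | hik
  · simp only [if_true, iff_self]; field_simp; ring
  · by_cases hside : (i : ℕ) < n / 2 ↔ (k : ℕ) < n / 2
    · simp [hik, hside]
    · simp [hik, hside]; field_simp; ring

theorem completeBipartiteHalf_eq_bot (hn : n < 2) : completeBipartiteHalf n = ⊥ := by
  ext u v
  simp only [completeBipartiteHalf_adj_iff, SimpleGraph.bot_adj, iff_false, not_not]
  omega

end CompleteBipartiteHalf

theorem completeBipartiteHalf_hadamardDiagonalizable_general {n : ℕ}
    (hH : ∃ H : Matrix (Fin n) (Fin n) ℝ, IsHadamardMatrix H) :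
    HadamardDiagonalizable (completeBipartiteHalf n) := by
  obtain ⟨H, hH⟩ := hH
  rcases lt_or_ge n 2 with hn | hn
  · refine ⟨H, 0, hH, ?_⟩
    ext i k
    simp [lap, completeBipartiteHalf_eq_bot hn, SimpleGraph.lapMatrix, SimpleGraph.degMatrix]
  · have hzo : (⟨0, by omega⟩ : Fin n) ≠ ⟨1, hn⟩ := by simp
    obtain ⟨M, hM, hz, ho⟩ := hH.exists_normalized hzo
    exact ⟨M, _, hM, lap_completeBipartiteHalf_eq (hH.even hn) hM hzo hz ho⟩

theorem completeBipartiteHalf_hadamardDiagonalizable {n : ℕ} (hn : Even n)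
    (hH : ∃ H : Matrix (Fin n) (Fin n) ℝ, IsHadamardMatrix H) :
    HadamardDiagonalizable (completeBipartiteHalf n) :=
  completeBipartiteHalf_hadamardDiagonalizable_general hH
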